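/- arXiv:2309.09999 — 2 statements merged into one kernel-verified Lean document; each statement's English description precedes it below -/
import Mathlib

section
/- Let EP be a minimum-order non-4-colorable maximal planar graph, v₀ a degree-5 vertex with neighbors v₁,…,v₅ in cyclic order, and f a proper 4-coloring of EP − {v₀} with f(v₁)=1, f(v₂)=2, f(v₃)=3, f(v₄)=4, f(v₅)=2. Then there exists a path from v₁ to v₃ all of whose vertices are colored 1 or 3, and there exists a path from v₁ to v₄ all of whose vertices are colored 1 or 4. -/
open SimpleGraph

/-- A simple graph is planar if it admits a straight-line drawing in the plane
(by Fáry's theorem this is equivalent to topological planarity for simple graphs):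
an injective placement of the vertices such that two distinct edges, drawn as
closed segments, meet only in common endpoints. -/
def IsPlanar {V : Type} (G : SimpleGraph V) : Prop :=
  ∃ pos : V → ℝ × ℝ, Function.Injective pos ∧
    ∀ u v x y : V, G.Adj u v → G.Adj x y → s(u, v) ≠ s(x, y) →
      ∀ p : ℝ × ℝ, p ∈ segment ℝ (pos u) (pos v) → p ∈ segment ℝ (pos x) (pos y) →
        (p = pos u ∨ p = pos v) ∧ (p = pos x ∨ p = pos y)

/-- A maximal planar graph (planar triangulation): planar, and no edge between
two non-adjacent vertices can be added while preserving planarity. -/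
def IsMaximalPlanar {V : Type} [Fintype V] (G : SimpleGraph V) : Prop :=
  IsPlanar G ∧ ∀ u v : V, u ≠ v → ¬ G.Adj u v →
    ¬ IsPlanar (G ⊔ SimpleGraph.fromEdgeSet {s(u, v)})

/-- A minimum-order counterexample to the Four Color Theorem: a maximal planar
graph that is not 4-colorable, of minimum number of vertices among all such graphs. -/
def IsMinCounterexample {V : Type} [Fintype V] (G : SimpleGraph V) : Prop :=
  IsMaximalPlanar G ∧ ¬ G.Colorable 4 ∧
    ∀ (W : Type) [Fintype W] (H : SimpleGraph W),
      IsMaximalPlanar H → ¬ H.Colorable 4 → Fintype.card V ≤ Fintype.card W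

private lemma reach_pred {V : Type} {G : SimpleGraph V} {P : V → Prop}
    (hP : ∀ u w, G.Adj u w → P w) {x y : V} (h : G.Reachable x y) (hx : P x) : P y := by
  obtain ⟨p⟩ := h
  revert hx
  induction p with
  | nil => exact fun h => h
  | cons h p ih => exact fun _ => ih (hP _ _ h)

private lemma walk_transfer {V : Type} {G H : SimpleGraph V}
    (hle : ∀ u w, G.Adj u w → H.Adj u w) {P : V → Prop}
    (hP : ∀ u w, G.Adj u w → P w) {x y : V} (p : G.Walk x y) :
    P x → ∃ q : H.Walk x y, ∀ u ∈ q.support, P u := by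
  induction p with
  | nil =>
    intro hx
    refine ⟨.nil, fun u hu => ?_⟩
    rw [SimpleGraph.Walk.support_nil, List.mem_singleton] at hu
    exact hu ▸ hx
  | cons h p ih =>
    intro hx
    obtain ⟨q, hq⟩ := ih (hP _ _ h)
    refine ⟨.cons (hle _ _ h) q, ?_⟩
    intro u hu
    rw [SimpleGraph.Walk.support_cons] at hu
    rcases List.mem_cons.mp hu with rfl | hu
    · exact hx
    · exact hq u hu

private lemma kempe {V : Type} {EP : SimpleGraph V} (hcol : ¬ EP.Colorable 4)
    {v₀ v₁ t : V} {f : V → Fin 4} {a b : Fin 4} (hab : a ≠ b)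
    (hf : ∀ u w : V, u ≠ v₀ → w ≠ v₀ → EP.Adj u w → f u ≠ f w)
    (h1adj : EP.Adj v₀ v₁) (htadj : EP.Adj v₀ t)
    (hfa : f v₁ = a) (hft : f t = b)
    (hA : ∀ w, EP.Adj v₀ w → w ≠ v₁ → f w ≠ a)
    (hB : ∀ w, EP.Adj v₀ w → w ≠ t → f w ≠ b) :
    ∃ p : EP.Walk v₁ t, ∀ u ∈ p.support, u ≠ v₀ ∧ (f u = a ∨ f u = b) := by
  classical
  set G : SimpleGraph V :=
    { Adj := fun u w => EP.Adj u w ∧ u ≠ v₀ ∧ w ≠ v₀ ∧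
        (f u = a ∨ f u = b) ∧ (f w = a ∨ f w = b)
      symm := by
        constructor
        intro u w h
        exact ⟨h.1.symm, h.2.2.1, h.2.1, h.2.2.2.2, h.2.2.2.1⟩
      loopless := by constructor; intro u h; exact EP.irrefl h.1 } with hG
  have hGadj : ∀ u w, G.Adj u w ↔
      (EP.Adj u w ∧ u ≠ v₀ ∧ w ≠ v₀ ∧ (f u = a ∨ f u = b) ∧ (f w = a ∨ f w = b)) := by
    intro u w; rw [hG]
  have hP1 : (v₁ ≠ v₀ ∧ (f v₁ = a ∨ f v₁ = b)) := ⟨h1adj.ne', Or.inl hfa⟩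
  by_cases hreach : G.Reachable v₁ t
  · obtain ⟨p⟩ := hreach
    exact walk_transfer (fun u w h => ((hGadj u w).mp h).1)
      (fun u w h => ⟨((hGadj u w).mp h).2.2.1, ((hGadj u w).mp h).2.2.2.2⟩) p hP1
  · exfalso
    -- Kempe switch
    set swp : Fin 4 → Fin 4 := fun x => Equiv.swap a b x with hswp
    have hswpa : swp a = b := Equiv.swap_apply_left a b
    have hswpb : swp b = a := Equiv.swap_apply_right a b
    have hswpinj : Function.Injective swp := (Equiv.swap a b).injective
    have hswpmem : ∀ x, (swp x = a ∨ swp x = b) ↔ (x = a ∨ x = b) := by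
      intro x
      by_cases hx : x = a
      · subst hx; rw [hswpa]; tauto
      by_cases hx2 : x = b
      · subst hx2; rw [hswpb]; tauto
      · simp [hswp, Equiv.swap_apply_of_ne_of_ne hx hx2]
    set C : V → Prop := fun u => G.Reachable v₁ u with hC
    have hCprop : ∀ u, C u → u ≠ v₀ ∧ (f u = a ∨ f u = b) := by
      intro u hu
      exact reach_pred (P := fun u => u ≠ v₀ ∧ (f u = a ∨ f u = b))
        (fun x y h => ⟨((hGadj x y).mp h).2.2.1, ((hGadj x y).mp h).2.2.2.2⟩) hu hP1
    have hCclosed : ∀ u w, C u → G.Adj u w → C w := fun u w hu h => hu.trans ⟨.cons h .nil⟩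
    set g : V → Fin 4 := fun u => if u = v₀ then a else if C u then swp (f u) else f u with hg
    have hg0 : g v₀ = a := by simp [hg]
    have hgC : ∀ u, u ≠ v₀ → C u → g u = swp (f u) := by
      intro u h1 h2; simp [hg, h1, h2]
    have hgnC : ∀ u, u ≠ v₀ → ¬ C u → g u = f u := by
      intro u h1 h2; simp [hg, h1, h2]
    have hnbrval : ∀ w, EP.Adj v₀ w → g w ≠ a := by
      intro w hw
      have hwne : w ≠ v₀ := hw.ne'
      by_cases hwC : C w
      · rw [hgC w hwne hwC]
        rcases (hCprop w hwC).2 with h | h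
        · by_cases hwv : w = v₁
          · subst hwv; rw [h, hswpa]; exact hab.symm
          · exact absurd h (hA w hw hwv)
        · by_cases hwt : w = t
          · subst hwt; exact absurd hwC hreach
          · exact absurd h (hB w hw hwt)
      · rw [hgnC w hwne hwC]
        by_cases hwv : w = v₁
        · subst hwv; exact absurd (Reachable.refl w) hwC
        · exact hA w hw hwv
    have valid : ∀ ⦃u w : V⦄, EP.Adj u w → g u ≠ g w := by
      intro u w huw
      by_cases hu0 : u = v₀
      · rw [hu0, hg0]
        rw [hu0] at huw
        exact fun h => hnbrval w huw h.symm
      by_cases hw0 : w = v₀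
      · rw [hw0, hg0]
        rw [hw0] at huw
        exact hnbrval u huw.symm
      have hfne := hf u w hu0 hw0 huw
      by_cases huC : C u <;> by_cases hwC : C w
      · rw [hgC u hu0 huC, hgC w hw0 hwC]
        exact fun h => hfne (hswpinj h)
      · have hfw : ¬ (f w = a ∨ f w = b) := by
          intro hfw
          exact hwC (hCclosed u w huC ((hGadj u w).mpr
            ⟨huw, hu0, hw0, (hCprop u huC).2, hfw⟩))
        rw [hgC u hu0 huC, hgnC w hw0 hwC]
        intro h
        exact hfw (by rw [← h]; exact (hswpmem (f u)).mpr (hCprop u huC).2)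
      · have hfu : ¬ (f u = a ∨ f u = b) := by
          intro hfu
          exact huC (hCclosed w u hwC ((hGadj w u).mpr
            ⟨huw.symm, hw0, hu0, (hCprop w hwC).2, hfu⟩))
        rw [hgnC u hu0 huC, hgC w hw0 hwC]
        intro h
        exact hfu (by rw [h]; exact (hswpmem (f w)).mpr (hCprop w hwC).2)
      · rw [hgnC u hu0 huC, hgnC w hw0 hwC]; exact hfne
    exact hcol ⟨SimpleGraph.Coloring.mk g fun {u w} h => valid h⟩

/-- In Kempe's setup on a minimum-order counterexample there must exist a `{1,3}`
Kempe chain from `v₁` to `v₃` and a `{1,4}` Kempe chain from `v₁` to `v₄`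
(colors encoded as `0,1,2,3 : Fin 4`), both avoiding `v₀`. -/
theorem stmt_9 {V : Type} [Fintype V] (EP : SimpleGraph V)
    (hEP : IsMinCounterexample EP)
    (v₀ v₁ v₂ v₃ v₄ v₅ : V)
    (hnbr : EP.neighborSet v₀ = {v₁, v₂, v₃, v₄, v₅})
    (hdeg : Nat.card (EP.neighborSet v₀) = 5)
    (hcyc : EP.Adj v₁ v₂ ∧ EP.Adj v₂ v₃ ∧ EP.Adj v₃ v₄ ∧ EP.Adj v₄ v₅ ∧ EP.Adj v₅ v₁)
    (f : V → Fin 4)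
    (hf : ∀ u w : V, u ≠ v₀ → w ≠ v₀ → EP.Adj u w → f u ≠ f w)
    (hf1 : f v₁ = 0) (hf2 : f v₂ = 1) (hf3 : f v₃ = 2) (hf4 : f v₄ = 3) (hf5 : f v₅ = 1) :
    (∃ p : EP.Walk v₁ v₃, ∀ u ∈ p.support, u ≠ v₀ ∧ (f u = 0 ∨ f u = 2)) ∧
    (∃ q : EP.Walk v₁ v₄, ∀ u ∈ q.support, u ≠ v₀ ∧ (f u = 0 ∨ f u = 3)) := by
  have hcol : ¬ EP.Colorable 4 := hEP.2.1
  have hmem : ∀ w, EP.Adj v₀ w → (w = v₁ ∨ w = v₂ ∨ w = v₃ ∨ w = v₄ ∨ w = v₅) := by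
    intro w hw
    have hw' : w ∈ EP.neighborSet v₀ := hw
    rw [hnbr] at hw'
    simpa using hw'
  have h1 : EP.Adj v₀ v₁ := by
    have : v₁ ∈ EP.neighborSet v₀ := by rw [hnbr]; simp
    exact this
  have h3 : EP.Adj v₀ v₃ := by
    have : v₃ ∈ EP.neighborSet v₀ := by rw [hnbr]; simp
    exact this
  have h4 : EP.Adj v₀ v₄ := by
    have : v₄ ∈ EP.neighborSet v₀ := by rw [hnbr]; simp
    exact this
  constructor
  · refine kempe hcol (by decide : (0 : Fin 4) ≠ 2) hf h1 h3 hf1 hf3 ?_ ?_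
    · intro w hw hne
      rcases hmem w hw with h | h | h | h | h
      · exact absurd h hne
      · rw [h, hf2]; decide
      · rw [h, hf3]; decide
      · rw [h, hf4]; decide
      · rw [h, hf5]; decide
    · intro w hw hne
      rcases hmem w hw with h | h | h | h | h
      · rw [h, hf1]; decide
      · rw [h, hf2]; decide
      · exact absurd h hne
      · rw [h, hf4]; decide
      · rw [h, hf5]; decide
  · refine kempe hcol (by decide : (0 : Fin 4) ≠ 3) hf h1 h4 hf1 hf4 ?_ ?_
    · intro w hw hne
      rcases hmem w hw with h | h | h | h | h
      · exact absurd h hne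
      · rw [h, hf2]; decide
      · rw [h, hf3]; decide
      · rw [h, hf4]; decide
      · rw [h, hf5]; decide
    · intro w hw hne
      rcases hmem w hw with h | h | h | h | h
      · rw [h, hf1]; decide
      · rw [h, hf2]; decide
      · rw [h, hf3]; decide
      · exact absurd h hne
      · rw [h, hf5]; decide
end

section
/- Every 3-cycle in a minimum-order non-4-colorable maximal planar graph EP with |EP| > 4 bounds a face; that is, EP contains no separating triangle. -/
open SimpleGraph

lemma IsPlanar.induce' {V : Type} {G : SimpleGraph V} (h : IsPlanar G) (s : Set V) :
    IsPlanar (G.induce s) := by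
  obtain ⟨pos, hinj, hseg⟩ := h
  refine ⟨fun v => pos v, fun u v huv => Subtype.ext (hinj huv), ?_⟩
  intro u v x y huv hxy hne p hp1 hp2
  refine hseg u v x y huv hxy (fun heq => hne ?_) p hp1 hp2
  rw [Sym2.eq_iff] at heq ⊢
  rcases heq with ⟨h1, h2⟩ | ⟨h1, h2⟩
  · exact Or.inl ⟨Subtype.ext h1, Subtype.ext h2⟩
  · exact Or.inr ⟨Subtype.ext h1, Subtype.ext h2⟩

lemma exists_maximalPlanar {W : Type} [Fintype W] :
    ∀ (k : ℕ) (H : SimpleGraph W), IsPlanar H →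
      (Set.univ : Set (Sym2 W)).ncard ≤ H.edgeSet.ncard + k →
      ∃ H', H ≤ H' ∧ IsMaximalPlanar H' := by
  intro k
  induction k with
  | zero =>
    intro H hpl hcard
    refine ⟨H, le_refl _, hpl, ?_⟩
    intro u v huv hadj _
    have hsub : H.edgeSet = Set.univ :=
      Set.eq_of_subset_of_ncard_le (Set.subset_univ _) (by simpa using hcard) (Set.toFinite _)
    exact hadj (by rw [← SimpleGraph.mem_edgeSet, hsub]; trivial)
  | succ k ih =>
    intro H hpl hcard
    by_cases hm : ∀ u v : W, u ≠ v → ¬ H.Adj u v →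
        ¬ IsPlanar (H ⊔ SimpleGraph.fromEdgeSet {s(u, v)})
    · exact ⟨H, le_refl _, hpl, hm⟩
    · push_neg at hm
      obtain ⟨u, v, huv, hadj, hpl2⟩ := hm
      have hedge : (H ⊔ SimpleGraph.fromEdgeSet {s(u, v)}).edgeSet
          = insert s(u, v) H.edgeSet := by
        rw [SimpleGraph.edgeSet_sup, SimpleGraph.edgeSet_fromEdgeSet]
        ext e
        simp only [Set.mem_union, Set.mem_diff, Set.mem_singleton_iff, Set.mem_insert_iff,
          Set.mem_setOf_eq]
        constructor
        · rintro (h | ⟨h, _⟩)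
          · exact Or.inr h
          · exact Or.inl h
        · rintro (h | h)
          · exact Or.inr ⟨h, by rw [h]; simpa using huv⟩
          · exact Or.inl h
      have hnotmem : s(u, v) ∉ H.edgeSet := fun h => hadj h
      have hcard2 : (Set.univ : Set (Sym2 W)).ncard
          ≤ (H ⊔ SimpleGraph.fromEdgeSet {s(u, v)}).edgeSet.ncard + k := by
        rw [hedge, Set.ncard_insert_of_notMem hnotmem (Set.toFinite _)]
        omega
      obtain ⟨H', hle, hmax⟩ := ih _ hpl2 hcard2
      exact ⟨H', le_trans le_sup_left hle, hmax⟩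


lemma glue_colorings {V : Type} (G : SimpleGraph V) (a b c : V)
    (hab : G.Adj a b) (hbc : G.Adj b c) (hac : G.Adj a c)
    (S1 S2 : Set V)
    (hcover : ∀ v : V, v ≠ a → v ≠ b → v ≠ c → v ∈ S1 ∨ v ∈ S2)
    (hsep : ∀ u ∈ S1, ∀ w ∈ S2, ¬ G.Adj u w)
    (h1 : (G.induce (S1 ∪ {a, b, c})).Colorable 4)
    (h2 : (G.induce (S2 ∪ {a, b, c})).Colorable 4) :
    G.Colorable 4 := by
  classical
  obtain ⟨c1⟩ := h1
  obtain ⟨c2⟩ := h2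
  have haA : a ∈ S1 ∪ ({a, b, c} : Set V) := Or.inr (by simp)
  have hbA : b ∈ S1 ∪ ({a, b, c} : Set V) := Or.inr (by simp)
  have hcA : c ∈ S1 ∪ ({a, b, c} : Set V) := Or.inr (by simp)
  have haB : a ∈ S2 ∪ ({a, b, c} : Set V) := Or.inr (by simp)
  have hbB : b ∈ S2 ∪ ({a, b, c} : Set V) := Or.inr (by simp)
  have hcB : c ∈ S2 ∪ ({a, b, c} : Set V) := Or.inr (by simp)
  have d1ab : c1 ⟨a, haA⟩ ≠ c1 ⟨b, hbA⟩ := c1.valid hab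
  have d1ac : c1 ⟨a, haA⟩ ≠ c1 ⟨c, hcA⟩ := c1.valid hac
  have d1bc : c1 ⟨b, hbA⟩ ≠ c1 ⟨c, hcA⟩ := c1.valid hbc
  have d2ab : c2 ⟨a, haB⟩ ≠ c2 ⟨b, hbB⟩ := c2.valid hab
  have d2ac : c2 ⟨a, haB⟩ ≠ c2 ⟨c, hcB⟩ := c2.valid hac
  have d2bc : c2 ⟨b, hbB⟩ ≠ c2 ⟨c, hcB⟩ := c2.valid hbc
  have ht1 : ({c1 ⟨a, haA⟩, c1 ⟨b, hbA⟩, c1 ⟨c, hcA⟩} : Finset (Fin 4)).card = 3 := by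
    rw [Finset.card_insert_of_notMem (by simp [d1ab, d1ac]),
      Finset.card_insert_of_notMem (by simp [d1bc]), Finset.card_singleton]
  have ht2 : ({c2 ⟨a, haB⟩, c2 ⟨b, hbB⟩, c2 ⟨c, hcB⟩} : Finset (Fin 4)).card = 3 := by
    rw [Finset.card_insert_of_notMem (by simp [d2ab, d2ac]),
      Finset.card_insert_of_notMem (by simp [d2bc]), Finset.card_singleton]
  obtain ⟨e1, he1⟩ : ∃ e, ({c1 ⟨a, haA⟩, c1 ⟨b, hbA⟩, c1 ⟨c, hcA⟩} : Finset (Fin 4))ᶜ = {e} :=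
    Finset.card_eq_one.mp (by rw [Finset.card_compl, ht1]; rfl)
  obtain ⟨e2, he2⟩ : ∃ e, ({c2 ⟨a, haB⟩, c2 ⟨b, hbB⟩, c2 ⟨c, hcB⟩} : Finset (Fin 4))ᶜ = {e} :=
    Finset.card_eq_one.mp (by rw [Finset.card_compl, ht2]; rfl)
  have he1mem : e1 ∉ ({c1 ⟨a, haA⟩, c1 ⟨b, hbA⟩, c1 ⟨c, hcA⟩} : Finset (Fin 4)) := by
    rw [← Finset.mem_compl, he1]; exact Finset.mem_singleton_self _
  have he2mem : e2 ∉ ({c2 ⟨a, haB⟩, c2 ⟨b, hbB⟩, c2 ⟨c, hcB⟩} : Finset (Fin 4)) := by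
    rw [← Finset.mem_compl, he2]; exact Finset.mem_singleton_self _
  have he1a : e1 ≠ c1 ⟨a, haA⟩ := by intro h; exact he1mem (by simp [h])
  have he1b : e1 ≠ c1 ⟨b, hbA⟩ := by intro h; exact he1mem (by simp [h])
  have he1c : e1 ≠ c1 ⟨c, hcA⟩ := by intro h; exact he1mem (by simp [h])
  have he1a' := he1a.symm
  have he1b' := he1b.symm
  have he1c' := he1c.symm
  have he2a : e2 ≠ c2 ⟨a, haB⟩ := by intro h; exact he2mem (by simp [h])
  have he2b : e2 ≠ c2 ⟨b, hbB⟩ := by intro h; exact he2mem (by simp [h])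
  have he2c : e2 ≠ c2 ⟨c, hcB⟩ := by intro h; exact he2mem (by simp [h])
  set g : Fin 4 → Fin 4 := fun x =>
    if x = c2 ⟨a, haB⟩ then c1 ⟨a, haA⟩
    else if x = c2 ⟨b, hbB⟩ then c1 ⟨b, hbA⟩
    else if x = c2 ⟨c, hcB⟩ then c1 ⟨c, hcA⟩
    else e1 with hg
  have gma : g (c2 ⟨a, haB⟩) = c1 ⟨a, haA⟩ := by simp only [hg]; simp
  have gmb : g (c2 ⟨b, hbB⟩) = c1 ⟨b, hbA⟩ := by
    simp only [hg]; rw [if_neg (Ne.symm d2ab)]; simp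
  have gmc : g (c2 ⟨c, hcB⟩) = c1 ⟨c, hcA⟩ := by
    simp only [hg]; rw [if_neg (Ne.symm d2ac), if_neg (Ne.symm d2bc)]; simp
  have gme : g e2 = e1 := by
    simp only [hg]; rw [if_neg he2a, if_neg he2b, if_neg he2c]
  have hto : ∀ x : Fin 4, x = c2 ⟨a, haB⟩ ∨ x = c2 ⟨b, hbB⟩ ∨ x = c2 ⟨c, hcB⟩ ∨ x = e2 := by
    intro x
    by_cases hx1 : x = c2 ⟨a, haB⟩
    · exact Or.inl hx1
    by_cases hx2 : x = c2 ⟨b, hbB⟩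
    · exact Or.inr (Or.inl hx2)
    by_cases hx3 : x = c2 ⟨c, hcB⟩
    · exact Or.inr (Or.inr (Or.inl hx3))
    refine Or.inr (Or.inr (Or.inr ?_))
    have hxc : x ∈ ({c2 ⟨a, haB⟩, c2 ⟨b, hbB⟩, c2 ⟨c, hcB⟩} : Finset (Fin 4))ᶜ := by
      simp [Finset.mem_compl, hx1, hx2, hx3]
    rw [he2] at hxc
    simpa using hxc
  have ginj : Function.Injective g := by
    intro x y hxy
    rcases hto x with rfl | rfl | rfl | rfl <;> rcases hto y with rfl | rfl | rfl | rfl <;>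
      simp_all [gma, gmb, gmc, gme]
  have hmemB : ∀ v : V, v ∉ S1 ∪ ({a, b, c} : Set V) → v ∈ S2 ∪ ({a, b, c} : Set V) := by
    intro v hv
    have hva : v ≠ a := fun h => hv (Or.inr (by simp [h]))
    have hvb : v ≠ b := fun h => hv (Or.inr (by simp [h]))
    have hvc : v ≠ c := fun h => hv (Or.inr (by simp [h]))
    rcases hcover v hva hvb hvc with h | h
    · exact absurd (Or.inl h) hv
    · exact Or.inl h
  refine ⟨SimpleGraph.Coloring.mk
    (fun v => if h : v ∈ S1 ∪ ({a, b, c} : Set V) then c1 ⟨v, h⟩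
      else g (c2 ⟨v, hmemB v h⟩)) ?_⟩
  intro u w hadj
  by_cases hu : u ∈ S1 ∪ ({a, b, c} : Set V) <;>
    by_cases hw : w ∈ S1 ∪ ({a, b, c} : Set V)
  · rw [dif_pos hu, dif_pos hw]
    exact c1.valid (v := ⟨u, hu⟩) (w := ⟨w, hw⟩) hadj
  · rw [dif_pos hu, dif_neg hw]
    have hwS2 : w ∈ S2 := by
      rcases hmemB w hw with h | h
      · exact h
      · exact absurd (Or.inr h) hw
    rcases hu with huS1 | huT
    · exact absurd hadj (hsep u huS1 w hwS2)
    · rcases huT with rfl | rfl | rfl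
      · exact fun h => c2.valid (v := ⟨u, haB⟩) (w := ⟨w, hmemB w hw⟩) hadj
          (ginj (gma.trans h))
      · exact fun h => c2.valid (v := ⟨u, hbB⟩) (w := ⟨w, hmemB w hw⟩) hadj
          (ginj (gmb.trans h))
      · exact fun h => c2.valid (v := ⟨u, hcB⟩) (w := ⟨w, hmemB w hw⟩) hadj
          (ginj (gmc.trans h))
  · rw [dif_neg hu, dif_pos hw]
    have huS2 : u ∈ S2 := by
      rcases hmemB u hu with h | h
      · exact h
      · exact absurd (Or.inr h) hu
    rcases hw with hwS1 | hwT
    · exact absurd hadj.symm (hsep w hwS1 u huS2)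
    · rcases hwT with rfl | rfl | rfl
      · exact fun h => c2.valid (v := ⟨w, haB⟩) (w := ⟨u, hmemB u hu⟩) hadj.symm
          (ginj (gma.trans h.symm))
      · exact fun h => c2.valid (v := ⟨w, hbB⟩) (w := ⟨u, hmemB u hu⟩) hadj.symm
          (ginj (gmb.trans h.symm))
      · exact fun h => c2.valid (v := ⟨w, hcB⟩) (w := ⟨u, hmemB u hu⟩) hadj.symm
          (ginj (gmc.trans h.symm))
  · rw [dif_neg hu, dif_neg hw]
    exact fun h => c2.valid (v := ⟨u, hmemB u hu⟩) (w := ⟨w, hmemB w hw⟩) hadj (ginj h)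

/-- A minimum-order non-4-colorable maximal planar graph with more than 4 vertices
has no separating triangle: for every triangle `a b c`, deleting its three vertices
leaves a connected graph (so the triangle bounds a face). -/
theorem stmt_15 {V : Type} [Fintype V] (EP : SimpleGraph V)
    (hEP : IsMinCounterexample EP) (hn : 4 < Fintype.card V)
    (a b c : V) (hab : EP.Adj a b) (hbc : EP.Adj b c) (hac : EP.Adj a c) :
    (EP.induce {v : V | v ≠ a ∧ v ≠ b ∧ v ≠ c}).Connected := by
  classical
  obtain ⟨hmaxpl, hncol, hmin⟩ := hEP
  set P : Set V := {v : V | v ≠ a ∧ v ≠ b ∧ v ≠ c} with hP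
  -- P is nonempty
  have hPne : ∃ v, v ∈ P := by
    by_contra h
    push_neg at h
    have hsub : (Finset.univ : Finset V) ⊆ {a, b, c} := by
      intro v _
      have hv := h v
      simp only [hP, Set.mem_setOf_eq, not_and_or, not_not, ne_eq] at hv
      simpa using hv
    have hle := Finset.card_le_card hsub
    rw [Finset.card_univ] at hle
    have t1 := Finset.card_insert_le a ({b, c} : Finset V)
    have t2 := Finset.card_insert_le b ({c} : Finset V)
    have t3 : ({c} : Finset V).card = 1 := Finset.card_singleton c
    omega
  by_contra hcon
  have hpre : ¬ (EP.induce P).Preconnected := by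
    intro hp
    exact hcon ((SimpleGraph.connected_iff _).mpr ⟨hp, hPne.elim (fun v hv => ⟨⟨v, hv⟩⟩)⟩)
  simp only [SimpleGraph.Preconnected, not_forall] at hpre
  obtain ⟨u0, w0, hreach⟩ := hpre
  set S1 : Set V := {v | ∃ h : v ∈ P, (EP.induce P).Reachable u0 ⟨v, h⟩} with hS1def
  set S2 : Set V := {v | v ∈ P ∧ v ∉ S1} with hS2def
  have hu0S1 : (u0 : V) ∈ S1 := ⟨u0.2, Reachable.refl u0⟩
  have hw0S2 : (w0 : V) ∈ S2 := by
    refine ⟨w0.2, fun hmem => ?_⟩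
    obtain ⟨h, hr⟩ := hmem
    exact hreach hr
  have hsep : ∀ u ∈ S1, ∀ w ∈ S2, ¬ EP.Adj u w := by
    intro u hu w hw hadj
    obtain ⟨huP, hur⟩ := hu
    obtain ⟨hwP, hwn⟩ := hw
    exact hwn ⟨hwP, hur.trans (SimpleGraph.Adj.reachable
      (show (EP.induce P).Adj ⟨u, huP⟩ ⟨w, hwP⟩ from hadj))⟩
  have hcover : ∀ v : V, v ≠ a → v ≠ b → v ≠ c → v ∈ S1 ∨ v ∈ S2 := by
    intro v h1 h2 h3
    by_cases h : v ∈ S1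
    · exact Or.inl h
    · exact Or.inr ⟨⟨h1, h2, h3⟩, h⟩
  -- one of the two pieces is not 4-colorable
  have hor : ¬ (EP.induce (S1 ∪ {a, b, c})).Colorable 4 ∨
      ¬ (EP.induce (S2 ∪ {a, b, c})).Colorable 4 := by
    by_contra h
    push_neg at h
    exact hncol (glue_colorings EP a b c hab hbc hac S1 S2 hcover hsep h.1 h.2)
  have key : ∀ S : Set V, ¬ (EP.induce (S ∪ {a, b, c})).Colorable 4 →
      ∀ x : V, x ∉ S ∪ ({a, b, c} : Set V) → False := by
    intro S hScol x hx
    obtain ⟨H', hle, hH'⟩ := exists_maximalPlanar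
      ((Set.univ : Set (Sym2 ↥(S ∪ ({a, b, c} : Set V)))).ncard)
      (EP.induce (S ∪ {a, b, c})) (hmaxpl.1.induce' _) (Nat.le_add_left _ _)
    have hH'ncol : ¬ H'.Colorable 4 := fun h => hScol (Colorable.mono_left hle h)
    have hge := hmin ↥(S ∪ ({a, b, c} : Set V)) H' hH' hH'ncol
    have hlt : Fintype.card ↥(S ∪ ({a, b, c} : Set V)) < Fintype.card V := by
      have h2 := Fintype.card_subtype_lt (p := fun v => v ∈ S ∪ ({a, b, c} : Set V)) hx
      convert h2
    omega
  have hT : ∀ y : V, y ∈ P → y ∉ ({a, b, c} : Set V) := by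
    intro y hy hmem
    obtain ⟨h1, h2, h3⟩ := hy
    rcases hmem with h | h | h
    · exact h1 h
    · exact h2 h
    · exact h3 h
  rcases hor with h | h
  · refine key S1 h (w0 : V) ?_
    rintro (hmem | hmem)
    · exact hw0S2.2 hmem
    · exact hT _ w0.2 hmem
  · refine key S2 h (u0 : V) ?_
    rintro (hmem | hmem)
    · exact hmem.2 hu0S1
    · exact hT _ u0.2 hmem
end
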